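/- Let $\mu_0$ be a probability measure on $[0,\infty)$ with continuous distribution function and $p := \mu_0([0,T]) \in (0,1)$, and let $\ell \in (0,1)$. Among all nondecreasing absolutely continuous paths $\varphi : [0,T] \to [0,1]$ with $\varphi(0) = 0$ and $\varphi(T) = \ell$ realizable as $\varphi(t) = \nu([0,t])$ for a probability measure $\nu \ll \mu_0$, the relative entropy cost $H(\nu,\mu_0)$ is minimized by the proportional path $\varphi^*(t) = \ell\,\mu_0([0,t])/p$, with minimal cost $\ell\ln(\ell/p) + (1-\ell)\ln((1-\ell)/(1-p))$. -/

import Mathlib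

/-!
Gibbs' inequality in the form `∫_A log(dν/dμ) dν ≥ ν(A) log(ν(A)/μ(A))` bounds the part of the
cost on `[0,T]` from below by `ℓ log(ℓ/p)` once `ν([0,T]) = ℓ`; the collapsed atom `⋆` then
contributes exactly `(1-ℓ) log((1-ℓ)/(1-p))`. Gibbs' bound is an equality when `dν/dμ₀` is
constant on `[0,T]`, as for `ν*`, whose density is `ℓ/p` on `[0,T]` and `(1-ℓ)/(1-p)` on `(T,∞)`.
-/

open MeasureTheory Real

/-- Relative entropy cost of a default-time law `ν` on `[0,∞)` after collapsing the
mass beyond `T` to the abstract point `⋆`: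
`H_T(ν,μ₀) = ∫_{[0,T]} ln(dν/dμ₀) dν + ν((T,∞)) ln(ν((T,∞))/μ₀((T,∞)))`. -/
noncomputable def collapsedEntropy (T : ℝ) (ν μ₀ : Measure ℝ) : ℝ :=
  (∫ x in Set.Icc 0 T, MeasureTheory.llr ν μ₀ x ∂ν)
    + (1 - (ν (Set.Icc 0 T)).toReal)
      * Real.log ((1 - (ν (Set.Icc 0 T)).toReal) / (1 - (μ₀ (Set.Icc 0 T)).toReal))

open Set
open scoped ENNReal

section Gibbs

variable {α : Type*} {mα : MeasurableSpace α} {ν μ : Measure α} [SigmaFinite ν] [SigmaFinite μ]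

/-- `1 - y⁻¹ ≤ log y` at `y = (dν/dμ)(x) / c`, using `dμ/dν = (dν/dμ)⁻¹` `ν`-a.e. -/
lemma ae_one_sub_mul_toReal_rnDeriv_le_llr_sub_log (hνμ : ν ≪ μ) {c : ℝ} (hc : 0 < c) :
    ∀ᵐ x ∂ν, 1 - c * (μ.rnDeriv ν x).toReal ≤ llr ν μ x - log c := by
  filter_upwards [Measure.rnDeriv_pos hνμ, hνμ.ae_le (Measure.rnDeriv_lt_top ν μ),
    Measure.inv_rnDeriv hνμ] with x hpos hlt hinv
  have hr : 0 < (ν.rnDeriv μ x).toReal := ENNReal.toReal_pos hpos.ne' hlt.ne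
  have hdual : (μ.rnDeriv ν x).toReal = (ν.rnDeriv μ x).toReal⁻¹ := by
    rw [← hinv, Pi.inv_apply, ENNReal.toReal_inv]
  have hlog := one_sub_inv_le_log_of_pos (div_pos hr hc)
  rw [log_div hr.ne' hc.ne', inv_div] at hlog
  rw [hdual, llr, ← div_eq_mul_inv]
  exact hlog

/-- Integrate the pointwise bound with `c = ν(A)/μ(A)`; the error term is
`ν(A) - c ∫_A dμ/dν dν ≥ ν(A) - c μ(A) = 0`. -/
lemma mul_log_div_le_setIntegral_llr (hνμ : ν ≪ μ) {A : Set α}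
    (hνA : 0 < (ν A).toReal) (hμA : 0 < (μ A).toReal) (hint : IntegrableOn (llr ν μ) A ν) :
    (ν A).toReal * log ((ν A).toReal / (μ A).toReal) ≤ ∫ x in A, llr ν μ x ∂ν := by
  set c := (ν A).toReal / (μ A).toReal
  have hc : 0 < c := div_pos hνA hμA
  have hμA_ne_top : μ A ≠ ⊤ := (ENNReal.toReal_pos_iff.mp hμA).2.ne
  have : IsFiniteMeasure (ν.restrict A) :=
    isFiniteMeasure_restrict.mpr (ENNReal.toReal_pos_iff.mp hνA).2.ne
  have hdual_int : IntegrableOn (fun x => (μ.rnDeriv ν x).toReal) A ν :=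
    Measure.integrableOn_toReal_rnDeriv hμA_ne_top
  have hdual_le : ∫ x in A, (μ.rnDeriv ν x).toReal ∂ν ≤ (μ A).toReal :=
    Measure.setIntegral_toReal_rnDeriv_le hμA_ne_top
  have hmono :
      ∫ x in A, (1 - c * (μ.rnDeriv ν x).toReal) ∂ν ≤ ∫ x in A, (llr ν μ x - log c) ∂ν :=
    integral_mono_ae ((integrable_const 1).sub (hdual_int.const_mul c))
      (hint.sub (integrable_const (log c)))
      (ae_restrict_of_ae (ae_one_sub_mul_toReal_rnDeriv_le_llr_sub_log hνμ hc))
  rw [integral_sub (integrable_const 1) (hdual_int.const_mul c), integral_sub hint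
    (integrable_const _), integral_const, integral_const, integral_const_mul,
    measureReal_restrict_apply_univ, measureReal_def, smul_eq_mul, smul_eq_mul,
    mul_one] at hmono
  have hcμ : c * (μ A).toReal = (ν A).toReal := div_mul_cancel₀ _ hμA.ne'
  linarith [mul_le_mul_of_nonneg_left hdual_le hc.le]

end Gibbs

section PiecewiseConstantDensity

variable {α : Type*} {mα : MeasurableSpace α} {μ : Measure α} {A B : Set α} {a b : ℝ≥0∞}

lemma smul_restrict_add_smul_restrict_eq_withDensity (hA : MeasurableSet A)
    (hB : MeasurableSet B) :
    a • μ.restrict A + b • μ.restrict B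
      = μ.withDensity (A.indicator (fun _ => a) + B.indicator (fun _ => b)) := by
  rw [withDensity_add_left (measurable_const.indicator hA), withDensity_indicator hA,
    withDensity_indicator hB, withDensity_const, withDensity_const]

lemma smul_restrict_add_smul_restrict_absolutelyContinuous (hA : MeasurableSet A)
    (hB : MeasurableSet B) : a • μ.restrict A + b • μ.restrict B ≪ μ := by
  rw [smul_restrict_add_smul_restrict_eq_withDensity hA hB]
  exact withDensity_absolutelyContinuous _ _

lemma smul_restrict_add_smul_restrict_apply_of_subset (hB : MeasurableSet B)
    (hAB : Disjoint A B) {s : Set α} (hs : s ⊆ A) :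
    (a • μ.restrict A + b • μ.restrict B) s = a * μ s := by
  have hsB : s ∩ B = ∅ := (hAB.mono_left hs).inter_eq
  simp [Measure.restrict_eq_self μ hs, Measure.restrict_apply' hB, hsB]

lemma setIntegral_llr_smul_restrict_add_smul_restrict [SigmaFinite μ] (hA : MeasurableSet A)
    (hB : MeasurableSet B) (hAB : Disjoint A B) :
    ∫ x in A, llr (a • μ.restrict A + b • μ.restrict B) μ x
        ∂(a • μ.restrict A + b • μ.restrict B)
      = (a * μ A).toReal * log a.toReal := by
  set ν := a • μ.restrict A + b • μ.restrict B with hν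
  have hdensity : ν.rnDeriv μ =ᵐ[μ] A.indicator (fun _ => a) + B.indicator (fun _ => b) := by
    rw [hν, smul_restrict_add_smul_restrict_eq_withDensity hA hB]
    exact Measure.rnDeriv_withDensity μ
      ((measurable_const.indicator hA).add (measurable_const.indicator hB))
  have hllr : ∀ᵐ x ∂ν.restrict A, llr ν μ x = log a.toReal := by
    filter_upwards [ae_restrict_of_ae
      ((smul_restrict_add_smul_restrict_absolutelyContinuous hA hB).ae_le hdensity),
      ae_restrict_mem hA] with x hx hxA
    simp [llr, hx, hxA, hAB.notMem_of_mem_left hxA]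
  rw [integral_congr_ae hllr, setIntegral_const, measureReal_def,
    smul_restrict_add_smul_restrict_apply_of_subset hB hAB subset_rfl, smul_eq_mul]

lemma isProbabilityMeasure_ofReal_smul_restrict_add_ofReal_smul_restrict
    (hAB : μ A + μ B = 1) {q r : ℝ}
    (hq : (μ A).toReal = q) (hq0 : 0 < q) (hq1 : q < 1) (hr0 : 0 ≤ r) (hr1 : r ≤ 1) :
    IsProbabilityMeasure (ENNReal.ofReal (r / q) • μ.restrict A
      + ENNReal.ofReal ((1 - r) / (1 - q)) • μ.restrict B) := by
  have hA_ne_top : μ A ≠ ⊤ := ne_top_of_le_ne_top ENNReal.one_ne_top (hAB ▸ le_self_add)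
  have hμA : μ A = ENNReal.ofReal q := by rw [← hq, ENNReal.ofReal_toReal hA_ne_top]
  have hμB : μ B = ENNReal.ofReal (1 - q) := by
    rw [ENNReal.eq_sub_of_add_eq' ENNReal.one_ne_top ((add_comm _ _).trans hAB), hμA,
      ← ENNReal.ofReal_one, ENNReal.ofReal_sub _ hq0.le]
  have h1q : (0:ℝ) < 1 - q := by linarith
  constructor
  rw [Measure.add_apply, Measure.smul_apply, Measure.smul_apply, Measure.restrict_apply_univ,
    Measure.restrict_apply_univ, hμA, hμB, smul_eq_mul, smul_eq_mul,
    ← ENNReal.ofReal_mul (by positivity), ← ENNReal.ofReal_mul (div_nonneg (by linarith) h1q.le),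
    div_mul_cancel₀ _ hq0.ne', div_mul_cancel₀ _ h1q.ne', ← ENNReal.ofReal_add hr0
    (by linarith), add_sub_cancel, ENNReal.ofReal_one]

end PiecewiseConstantDensity

lemma measure_Icc_zero_add_measure_Ioi {μ : Measure ℝ} [IsProbabilityMeasure μ]
    (h : μ (Iio 0) = 0) (T : ℝ) : μ (Icc 0 T) + μ (Ioi T) = 1 := by
  rw [← measure_union ((Iic_disjoint_Ioi le_rfl).mono_left Icc_subset_Iic_self)
    measurableSet_Ioi, ← prob_compl_eq_zero_iff (measurableSet_Icc.union measurableSet_Ioi)]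
  refine measure_mono_null (fun x hx => ?_) h
  simp only [mem_compl_iff, mem_union, mem_Icc, mem_Ioi, not_or, not_and, not_lt] at hx
  exact lt_of_not_ge fun hx0 => hx.1 hx0 hx.2

theorem optimal_path_independent_case_general
    (T : ℝ)
    (μ₀ : Measure ℝ) [IsProbabilityMeasure μ₀]
    (hsupp : μ₀ (Set.Iio 0) = 0)
    (p ℓ : ℝ) (hp : p ∈ Set.Ioo (0:ℝ) 1) (hℓ : ℓ ∈ Set.Ioo (0:ℝ) 1)
    (hμT : (μ₀ (Set.Icc 0 T)).toReal = p)
    (νstar : Measure ℝ)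
    (hνstar : νstar
      = (ENNReal.ofReal (ℓ / p)) • μ₀.restrict (Set.Icc 0 T)
        + (ENNReal.ofReal ((1 - ℓ) / (1 - p))) • μ₀.restrict (Set.Ioi T)) :
    (∀ ν : Measure ℝ, IsProbabilityMeasure ν → ν ≪ μ₀ →
        (ν (Set.Icc 0 T)).toReal = ℓ →
        Integrable (MeasureTheory.llr ν μ₀) (ν.restrict (Set.Icc 0 T)) →
        ℓ * Real.log (ℓ / p) + (1 - ℓ) * Real.log ((1 - ℓ) / (1 - p))
          ≤ collapsedEntropy T ν μ₀)
    ∧ collapsedEntropy T νstar μ₀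
        = ℓ * Real.log (ℓ / p) + (1 - ℓ) * Real.log ((1 - ℓ) / (1 - p))
    ∧ IsProbabilityMeasure νstar
    ∧ νstar ≪ μ₀
    ∧ ∀ t ∈ Set.Icc (0:ℝ) T,
        (νstar (Set.Icc 0 t)).toReal = ℓ * (μ₀ (Set.Icc 0 t)).toReal / p := by
  obtain ⟨hp0, hp1⟩ := hp
  obtain ⟨hℓ0, hℓ1⟩ := hℓ
  have hdisj : Disjoint (Icc (0:ℝ) T) (Ioi T) :=
    (Iic_disjoint_Ioi le_rfl).mono_left Icc_subset_Iic_self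
  have hpath : ∀ t ≤ T, (νstar (Icc 0 t)).toReal = ℓ * (μ₀ (Icc 0 t)).toReal / p := by
    intro t ht
    rw [hνstar, smul_restrict_add_smul_restrict_apply_of_subset measurableSet_Ioi hdisj
      (Icc_subset_Icc_right ht), ENNReal.toReal_mul, ENNReal.toReal_ofReal (by positivity)]
    ring
  have hνT : (νstar (Icc 0 T)).toReal = ℓ := by
    rw [hpath T le_rfl, hμT, mul_div_cancel_right₀ _ hp0.ne']
  refine ⟨fun ν _ hνμ hνℓ hint => ?_, ?_, ?_, ?_, fun t ht => hpath t ht.2⟩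
  · have hgibbs := mul_log_div_le_setIntegral_llr hνμ (hνℓ ▸ hℓ0) (hμT ▸ hp0) hint
    rw [hνℓ, hμT] at hgibbs
    rw [collapsedEntropy, hνℓ, hμT]
    linarith
  · have hintegral : ∫ x in Icc 0 T, llr νstar μ₀ x ∂νstar = ℓ * log (ℓ / p) := by
      rw [hνstar, setIntegral_llr_smul_restrict_add_smul_restrict measurableSet_Icc
        measurableSet_Ioi hdisj, ENNReal.toReal_mul, ENNReal.toReal_ofReal (by positivity), hμT,
        div_mul_cancel₀ _ hp0.ne']
    rw [collapsedEntropy, hintegral, hνT, hμT]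
  · rw [hνstar]
    exact isProbabilityMeasure_ofReal_smul_restrict_add_ofReal_smul_restrict
      (measure_Icc_zero_add_measure_Ioi hsupp T) hμT hp0 hp1 hℓ0.le hℓ1.le
  · rw [hνstar]
    exact smul_restrict_add_smul_restrict_absolutelyContinuous measurableSet_Icc measurableSet_Ioi

/-- among probability measures `ν ≪ μ₀` with `ν([0,T]) = ℓ`, the
entropy cost `H_T` is minimized by the measure inducing the proportional path
`φ*(t) = ℓ μ₀([0,t])/p`, with minimal cost the Bernoulli relative entropy. -/
theorem optimal_path_independent_case
    (T : ℝ) (hT : 0 < T)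
    (μ₀ : Measure ℝ) [IsProbabilityMeasure μ₀]
    (hsupp : μ₀ (Set.Iio 0) = 0)
    (hcdf : Continuous fun t : ℝ => (μ₀ (Set.Iic t)).toReal)
    (p ℓ : ℝ) (hp : p ∈ Set.Ioo (0:ℝ) 1) (hℓ : ℓ ∈ Set.Ioo (0:ℝ) 1)
    (hμT : (μ₀ (Set.Icc 0 T)).toReal = p)
    (νstar : Measure ℝ)
    (hνstar : νstar
      = (ENNReal.ofReal (ℓ / p)) • μ₀.restrict (Set.Icc 0 T)
        + (ENNReal.ofReal ((1 - ℓ) / (1 - p))) • μ₀.restrict (Set.Ioi T)) :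
    (∀ ν : Measure ℝ, IsProbabilityMeasure ν → ν ≪ μ₀ →
        (ν (Set.Icc 0 T)).toReal = ℓ →
        Integrable (MeasureTheory.llr ν μ₀) (ν.restrict (Set.Icc 0 T)) →
        ℓ * Real.log (ℓ / p) + (1 - ℓ) * Real.log ((1 - ℓ) / (1 - p))
          ≤ collapsedEntropy T ν μ₀)
    ∧ collapsedEntropy T νstar μ₀
        = ℓ * Real.log (ℓ / p) + (1 - ℓ) * Real.log ((1 - ℓ) / (1 - p))
    ∧ IsProbabilityMeasure νstar
    ∧ νstar ≪ μ₀
    ∧ ∀ t ∈ Set.Icc (0:ℝ) T,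
        (νstar (Set.Icc 0 t)).toReal = ℓ * (μ₀ (Set.Icc 0 t)).toReal / p :=
  optimal_path_independent_case_general T μ₀ hsupp p ℓ hp hℓ hμT νstar hνstar
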